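/- arXiv:0805.4576 — 5 statements merged into one kernel-verified Lean document; each statement's English description precedes it below -/
import Mathlib

section
/- Let X be a locally Noetherian scheme, let x_0, x_1, x_2 be an increasing sequence in X, and let Z be a closed subset of X with x_2 ∉ Z. Then there exists a point x_1' of X lying outside Z such that x_0, x_1', x_2 is an increasing sequence. -/
open AlgebraicGeometry CategoryTheory

/-- A sequence of points `x 0, …, x d` of a topological space is an *increasing
sequence* (of length `d`) if `x i ≠ x (i+1)` and `x i` lies in the closure of
`{x (i+1)}` for all `0 ≤ i < d`. -/
def IsIncreasingSeq {T : Type*} [TopologicalSpace T] {d : ℕ} (x : Fin (d + 1) → T) : Prop :=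
  ∀ i : Fin d, x i.castSucc ≠ x i.succ ∧ x i.castSucc ∈ closure ({x i.succ} : Set T)

/-- `U ∈ D_d(T)`: `U` is an open subset such that every point `z` outside of `U`
admits an increasing sequence `z = x 0, x 1, …, x d` of length `d`
(the standard density structure). -/
def InStdDensity (T : Type*) [TopologicalSpace T] (d : ℕ) (U : Set T) : Prop :=
  IsOpen U ∧ ∀ z ∉ U, ∃ x : Fin (d + 1) → T, x 0 = z ∧ IsIncreasingSeq x

/-! Pass to an affine neighbourhood `Spec R` of `x₀`, so that `x₂ ⤳ x₁ ⤳ x₀` becomes a chain of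
primes `p₂ < p₁ < p₀` in a Noetherian ring and `Z` the zero locus of an ideal containing some
`a ∉ p₂`. If `a ∉ p₁` we are done. Otherwise, by Krull's principal ideal theorem in `R ⧸ p₂`, the
finitely many primes `Q` minimal over `p₂ + (a)` sit directly above `p₂`, and neither they nor
`p₂` contain `p₀`. Prime avoidance gives `x ∈ p₀` outside all of them; a prime `q ⊆ p₀` minimal
over `p₂ + (x)` again sits directly above `p₂`, so `q ≠ p₀`, and `a ∉ q`, since otherwise `q`
would contain, hence equal, one of the `Q`. -/

namespace Ideal

variable {R : Type*} [CommRing R] [IsNoetherianRing R]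

/-- Krull's principal ideal theorem in `R ⧸ p`. -/
theorem eq_of_lt_of_le_of_mem_minimalPrimes_sup_span_singleton {p q Q : Ideal R} [p.IsPrime]
    [q.IsPrime] {a : R} (hQ : Q ∈ (p ⊔ span {a}).minimalPrimes) (hpq : p < q) (hqQ : q ≤ Q) :
    q = Q := by
  have := hQ.isPrime
  by_contra hne
  let π := Quotient.mk p
  have hmap_lt {I J : Ideal R} (hI : p ≤ I) (hIJ : I < J) : I.map π < J.map π :=
    lt_of_le_of_ne (map_mono hIJ.le) fun h ↦ hIJ.ne <| by
      rw [← comap_map_mk hI, h, comap_map_mk (hI.trans hIJ.le)]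
  have : (q.map π).IsPrime :=
    map_isPrime_of_surjective Quotient.mk_surjective (by rw [mk_ker]; exact hpq.le)
  have : (Q.map π).IsPrime :=
    map_isPrime_of_surjective Quotient.mk_surjective (by rw [mk_ker]; exact hpq.le.trans hqQ)
  have hbot : ⊥ < q.map π := map_quotient_self p ▸ hmap_lt le_rfl hpq
  have h₁ := height_add_one_le_of_lt_of_isPrime hbot
  have h₂ := height_add_one_le_of_lt_of_isPrime (hmap_lt hpq.le (lt_of_le_of_ne hqQ hne))
  rw [height_bot, zero_add] at h₁
  have : (1 + 1 : ℕ∞) ≤ 1 :=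
    (add_le_add_left h₁ 1).trans (h₂.trans (map_height_le_one_of_mem_minimalPrimes hQ))
  norm_num at this

theorem exists_isPrime_lt_lt_notMem {p₂ p₁ p₀ : Ideal R} [p₂.IsPrime] [p₁.IsPrime]
    [p₀.IsPrime] (h₂₁ : p₂ < p₁) (h₁₀ : p₁ < p₀) {a : R} (ha : a ∉ p₂) :
    ∃ q : Ideal R, q.IsPrime ∧ p₂ < q ∧ q < p₀ ∧ a ∉ q := by
  by_cases ha₁ : a ∉ p₁
  · exact ⟨p₁, ‹_›, h₂₁, h₁₀, ha₁⟩
  have ha₀ : a ∈ p₀ := h₁₀.le (not_not.mp ha₁)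
  have hp₀ (b : R) : p₀ ∉ (p₂ ⊔ span {b}).minimalPrimes := fun hb ↦
    h₁₀.ne (eq_of_lt_of_le_of_mem_minimalPrimes_sup_span_singleton hb h₂₁ h₁₀.le)
  set 𝒬 := (p₂ ⊔ span {a}).minimalPrimes
  obtain ⟨x, hx₀, hx⟩ : ∃ x ∈ p₀, x ∉ ⋃ Q ∈ insert p₂ 𝒬, (Q : Set R) := by
    by_contra! hsub
    obtain ⟨Q, hQ, hle⟩ := (subset_union_prime_finite (f := id)
      ((finite_minimalPrimes_of_isNoetherianRing R _).insert p₂) p₂ p₂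
      (fun Q hQ hne _ ↦ (hQ.resolve_left hne).isPrime)).mp hsub
    rcases hQ with rfl | hQ
    · exact h₁₀.not_ge (hle.trans h₂₁.le)
    · have := hQ.isPrime
      have hle' : Q ≤ p₀ :=
        hQ.2 ⟨‹_›, sup_le (h₂₁.trans h₁₀).le ((span_singleton_le_iff_mem _).mpr ha₀)⟩ hle
      exact hp₀ a (le_antisymm hle' hle ▸ hQ)
  simp only [Set.mem_iUnion, SetLike.mem_coe, not_exists, Set.mem_insert_iff] at hx
  obtain ⟨q, hq, hq₀⟩ := exists_minimalPrimes_le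
    (sup_le (h₂₁.trans h₁₀).le ((span_singleton_le_iff_mem _).mpr hx₀))
  have := hq.isPrime
  have hxq : x ∈ q := hq.1.2 (mem_sup_right (mem_span_singleton_self x))
  have h₂q : p₂ < q :=
    lt_of_le_of_ne (le_sup_left.trans hq.1.2) fun h ↦ hx p₂ (.inl rfl) (h ▸ hxq)
  refine ⟨q, ‹_›, h₂q, lt_of_le_of_ne hq₀ fun h ↦ hp₀ x (h ▸ hq), fun haq ↦ ?_⟩
  obtain ⟨Q, hQ, hQq⟩ := exists_minimalPrimes_le
    (sup_le h₂q.le ((span_singleton_le_iff_mem _).mpr haq))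
  have := hQ.isPrime
  have h₂Q : p₂ < Q := lt_of_le_of_ne (le_sup_left.trans hQ.1.2) fun h ↦
    ha (h ▸ hQ.1.2 (mem_sup_right (mem_span_singleton_self a)))
  exact hx Q (.inr hQ) (eq_of_lt_of_le_of_mem_minimalPrimes_sup_span_singleton hq h₂Q hQq ▸ hxq)

end Ideal

namespace PrimeSpectrum

variable {R : Type*} [CommRing R]

theorem lt_iff_specializes_and_ne {x y : PrimeSpectrum R} : x < y ↔ x ⤳ y ∧ x ≠ y := by
  rw [lt_iff_le_and_ne, le_iff_specializes]

theorem exists_lt_lt_notMem_of_isClosed [IsNoetherianRing R] {x₂ x₁ x₀ : PrimeSpectrum R}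
    (h₂₁ : x₂ < x₁) (h₁₀ : x₁ < x₀) {Z : Set (PrimeSpectrum R)} (hZ : IsClosed Z)
    (hx₂ : x₂ ∉ Z) : ∃ y ∉ Z, x₂ < y ∧ y < x₀ := by
  obtain ⟨I, rfl⟩ := (isClosed_iff_zeroLocus_ideal Z).mp hZ
  obtain ⟨a, haI, hax₂⟩ := Set.not_subset.mp ((mem_zeroLocus _ _).not.mp hx₂)
  obtain ⟨q, hq, h₂q, hq₀, haq⟩ := Ideal.exists_isPrime_lt_lt_notMem h₂₁ h₁₀ hax₂
  exact ⟨⟨q, hq⟩, fun hI ↦ haq (hI haI), h₂q, hq₀⟩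

end PrimeSpectrum

theorem stmt_2 (X : Scheme) [IsLocallyNoetherian X] (x₀ x₁ x₂ : X)
    (h₀ : x₀ ≠ x₁) (h₀c : x₀ ∈ closure ({x₁} : Set X))
    (h₁ : x₁ ≠ x₂) (h₁c : x₁ ∈ closure ({x₂} : Set X))
    (Z : Set X) (hZ : IsClosed Z) (hx₂ : x₂ ∉ Z) :
    ∃ x₁' : X, x₁' ∉ Z ∧ x₀ ≠ x₁' ∧ x₀ ∈ closure ({x₁'} : Set X) ∧
      x₁' ≠ x₂ ∧ x₁' ∈ closure ({x₂} : Set X) := by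
  simp only [← specializes_iff_mem_closure] at h₀c h₁c ⊢
  obtain ⟨_, ⟨V, (hV : IsAffineOpen V), rfl⟩, hx₀V, -⟩ :=
    X.isBasis_affineOpens.exists_subset_of_mem_open (Set.mem_univ x₀) isOpen_univ
  have := IsLocallyNoetherian.component_noetherian ⟨V, hV⟩
  have hx₁V := h₀c.mem_open V.isOpen hx₀V
  have hx₂V := h₁c.mem_open V.isOpen hx₁V
  rw [← hV.range_fromSpec] at hx₀V hx₁V hx₂V
  obtain ⟨y₀, rfl⟩ := hx₀V
  obtain ⟨y₁, rfl⟩ := hx₁V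
  obtain ⟨y₂, rfl⟩ := hx₂V
  have hf := hV.fromSpec.isOpenEmbedding
  simp only [hf.isInducing.specializes_iff, hf.injective.ne_iff] at h₀ h₀c h₁ h₁c
  obtain ⟨y, hyZ, h₂y, hy₀⟩ := PrimeSpectrum.exists_lt_lt_notMem_of_isClosed
    (PrimeSpectrum.lt_iff_specializes_and_ne.mpr ⟨h₁c, h₁.symm⟩)
    (PrimeSpectrum.lt_iff_specializes_and_ne.mpr ⟨h₀c, h₀.symm⟩) (hZ.preimage hf.continuous) hx₂
  obtain ⟨h₂y, hy₂⟩ := PrimeSpectrum.lt_iff_specializes_and_ne.mp h₂y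
  obtain ⟨hy₀, hy₀'⟩ := PrimeSpectrum.lt_iff_specializes_and_ne.mp hy₀
  exact ⟨hV.fromSpec y, hyZ, hf.injective.ne hy₀'.symm, hy₀.map hf.continuous,
    hf.injective.ne hy₂.symm, h₂y.map hf.continuous⟩
end

section
/- Let X be a Noetherian scheme and let Y be a constructible subset of the underlying topological space of X. Then every point y' of the closure cl(Y) of Y in X belongs to the closure of a single point y of Y, i.e. there exists y ∈ Y with y' ∈ cl({y}). -/
open AlgebraicGeometry CategoryTheory

/-- A subset of a topological space is *constructible* if it is a finite union of
intersections of an open set with a closed set. -/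
def IsConstructibleSet {T : Type*} [TopologicalSpace T] (Y : Set T) : Prop :=
  ∃ S : Finset (Set T × Set T), (∀ p ∈ S, IsOpen p.1 ∧ IsClosed p.2) ∧
    Y = ⋃ p ∈ S, p.1 ∩ p.2

/-!
A Noetherian space, and hence any subspace `Y` of it, is the union of finitely many irreducible
components, so a point of `closure Y` lies in the closure of an irreducible subset `S ⊆ Y`.
If `Y = U ∩ Z` is locally closed, the generic point of `closure S` lies in `Z ⊇ closure S`
and in `U`, since the open set `U` meets `S`. A constructible set is a finite union of locally
closed ones, and closure commutes with finite unions.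
-/

section

open TopologicalSpace Set

variable {T : Type*} [TopologicalSpace T]

theorem exists_isIrreducible_subset_of_mem_closure [NoetherianSpace T] {Y : Set T} {y' : T}
    (hy' : y' ∈ closure Y) : ∃ S ⊆ Y, IsIrreducible S ∧ y' ∈ closure S := by
  have hY : Y = ⋃ C ∈ irreducibleComponents Y, ((↑) : Y → T) '' C := by
    rw [← sUnion_image, ← image_sUnion, sUnion_irreducibleComponents, image_univ,
      Subtype.range_coe]
  rw [hY, NoetherianSpace.finite_irreducibleComponents.closure_biUnion] at hy'
  obtain ⟨C, hC, hy'C⟩ := mem_iUnion₂.1 hy'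
  exact ⟨_, image_subset_iff.2 fun x _ ↦ x.2,
    hC.prop.image _ continuous_subtype_val.continuousOn,
    hy'C⟩

theorem IsLocallyClosed.exists_mem_closure_singleton_eq_closure [QuasiSober T] {Y S : Set T}
    (hY : IsLocallyClosed Y) (hSY : S ⊆ Y) (hS : IsIrreducible S) :
    ∃ η ∈ Y, closure {η} = closure S := by
  obtain ⟨U, Z, hU, hZ, rfl⟩ := hY
  have hη := hS.isGenericPoint_genericPoint_closure
  refine ⟨hS.genericPoint, ⟨?_, ?_⟩, hη⟩
  · obtain ⟨s, hs⟩ := hS.nonempty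
    exact (hη.mem_open_set_iff hU).2 ⟨s, subset_closure hs, (hSY hs).1⟩
  · exact (hη.mem_closed_set_iff hZ).2 (closure_minimal (hSY.trans inter_subset_right) hZ)

theorem IsLocallyClosed.exists_mem_closure_singleton [NoetherianSpace T] [QuasiSober T]
    {Y : Set T} (hY : IsLocallyClosed Y) {y' : T} (hy' : y' ∈ closure Y) :
    ∃ y ∈ Y, y' ∈ closure {y} := by
  obtain ⟨S, hSY, hS, hy'S⟩ := exists_isIrreducible_subset_of_mem_closure hy'
  obtain ⟨η, hηY, hη⟩ := hY.exists_mem_closure_singleton_eq_closure hSY hS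
  exact ⟨η, hηY, hη ▸ hy'S⟩

theorem IsConstructibleSet.exists_mem_closure_singleton [NoetherianSpace T] [QuasiSober T]
    {Y : Set T} (hY : IsConstructibleSet Y) {y' : T} (hy' : y' ∈ closure Y) :
    ∃ y ∈ Y, y' ∈ closure {y} := by
  obtain ⟨P, hP, rfl⟩ := hY
  rw [P.closure_biUnion] at hy'
  obtain ⟨p, hpP, hy'p⟩ := mem_iUnion₂.1 hy'
  obtain ⟨y, hy, hy'y⟩ :=
    IsLocallyClosed.exists_mem_closure_singleton ⟨_, _, (hP p hpP).1, (hP p hpP).2, rfl⟩ hy'p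
  exact ⟨y, mem_iUnion₂.2 ⟨p, hpP, hy⟩, hy'y⟩

end

theorem stmt_4 (X : Scheme) [AlgebraicGeometry.IsNoetherian X]
    (Y : Set X) (hY : IsConstructibleSet Y) :
    ∀ y' ∈ closure Y, ∃ y ∈ Y, y' ∈ closure ({y} : Set X) :=
  fun _ ↦ hY.exists_mem_closure_singleton
end

section
/- Let q : W → X be a morphism of schemes all of whose fibers are zero-dimensional (for every x ∈ X the underlying topological space of q⁻¹(x) has Krull dimension ≤ 0), and let y_0, y_1, …, y_m be an increasing sequence in W. Then q(y_0), q(y_1), …, q(y_m) is an increasing sequence in X. -/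
open AlgebraicGeometry CategoryTheory

/-- In a space of Krull dimension `≤ 0` every irreducible closed set is maximal, so the closure
of a point that specializes to another one is also the closure of that other point. -/
theorem Specializes.eq_of_topologicalKrullDim_nonpos {T : Type*} [TopologicalSpace T] [T0Space T]
    (hT : topologicalKrullDim T ≤ 0) {a b : T} (h : a ⤳ b) : a = b := by
  let pointClosure (x : T) : TopologicalSpace.IrreducibleCloseds T :=
    ⟨closure {x}, isIrreducible_singleton.closure, isClosed_closure⟩
  have hba : pointClosure b ≤ pointClosure a := specializes_iff_closure_subset.mp h
  have hab : pointClosure a ≤ pointClosure b := Order.krullDim_nonpos_iff_forall_isMax.mp hT _ hba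
  exact (h.antisymm (specializes_iff_closure_subset.mpr hab)).eq

theorem Specializes.eq_of_mem_of_topologicalKrullDim_nonpos {T : Type*} [TopologicalSpace T]
    [T0Space T] {S : Set T} (hS : topologicalKrullDim S ≤ 0) {a b : T} (ha : a ∈ S) (hb : b ∈ S)
    (h : a ⤳ b) : a = b :=
  congrArg Subtype.val <| Specializes.eq_of_topologicalKrullDim_nonpos hS
    (a := ⟨a, ha⟩) (b := ⟨b, hb⟩) (Topology.IsInducing.subtypeVal.specializes_iff.mp h)

theorem stmt_6 (W X : Scheme) (q : W ⟶ X)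
    (hfib : ∀ x : X, topologicalKrullDim (q.base ⁻¹' ({x} : Set X)) ≤ 0)
    (m : ℕ) (y : Fin (m + 1) → W) (hy : IsIncreasingSeq y) :
    IsIncreasingSeq (fun i => q.base (y i)) := by
  intro i
  obtain ⟨hne, hcl⟩ := hy i
  have hsp : y i.succ ⤳ y i.castSucc := specializes_iff_mem_closure.mpr hcl
  refine ⟨fun heq => hne ?_, (hsp.map q.base.hom.continuous).mem_closure⟩
  -- `y i.succ` and `y i.castSucc` both lie in the fibre over `q.base (y i.succ)`.
  exact (hsp.eq_of_mem_of_topologicalKrullDim_nonpos (hfib _) rfl heq).symm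
end

section
/- Let p : Y → X be a proper morphism and e : A → X a closed immersion of schemes such that the induced morphism p⁻¹(X ∖ e(A)) → X ∖ e(A) is an isomorphism, where X ∖ e(A) is the open complement of e(A), and let B = A ×_X Y. Then the diagonal Δ : Y → Y ×_X Y is a closed immersion, the natural morphism B ×_A B → Y ×_X Y is a closed immersion, and the underlying set of Y ×_X Y is the union of the image of Δ and the image of B ×_A B. -/
/-
Over `e(A)` the scheme `Y ×_X Y` is `B ×_A B`. Over the open complement `U` of `e(A)` it is
`p⁻¹U ×_U p⁻¹U`, and since `p⁻¹U ⟶ U` is a monomorphism its diagonal is an isomorphism, so every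
such point lies on the diagonal of `Y`.
-/

open AlgebraicGeometry CategoryTheory CategoryTheory.Limits

/-- Given `e : A ⟶ X` and `p : Y ⟶ X`, with `B := A ×_X Y = pullback e p`, the
natural morphism `B ×_A B ⟶ Y ×_X Y` induced by `B ⟶ Y` on both factors and
`e : A ⟶ X` on the base. -/
noncomputable def sqMap {X Y A : Scheme} (e : A ⟶ X) (p : Y ⟶ X) :
    pullback (pullback.fst e p) (pullback.fst e p) ⟶ pullback p p :=
  pullback.map (pullback.fst e p) (pullback.fst e p) p p
    (pullback.snd e p) (pullback.snd e p) e pullback.condition pullback.condition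

namespace AlgebraicGeometry

instance Scheme.pullback_map_isClosedImmersion {X Y S X' Y' S' : Scheme}
    (f : X ⟶ S) (g : Y ⟶ S) (f' : X' ⟶ S') (g' : Y' ⟶ S')
    (i₁ : X ⟶ X') (i₂ : Y ⟶ Y') (i₃ : S ⟶ S') (e₁ : f ≫ i₃ = i₁ ≫ f') (e₂ : g ≫ i₃ = i₂ ≫ g')
    [IsClosedImmersion i₁] [IsClosedImmersion i₂] [Mono i₃] :
    IsClosedImmersion (pullback.map f g f' g' i₁ i₂ i₃ e₁ e₂) := by
  rw [pullback_map_eq_pullbackFstFstIso_inv]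
  infer_instance

end AlgebraicGeometry

lemma range_sqMap {X Y A : Scheme} (e : A ⟶ X) (p : Y ⟶ X) [Mono e] :
    Set.range (sqMap e p) = (pullback.fst p p ≫ p) ⁻¹' Set.range e := by
  ext z
  have hsnd : p (pullback.snd p p z) = p (pullback.fst p p z) := by
    rw [← Scheme.Hom.comp_apply, ← Scheme.Hom.comp_apply, pullback.condition]
  simp [sqMap, Scheme.Pullback.range_map, Scheme.Pullback.range_snd, hsnd]

lemma diagonal_comp_sqMap {X Y A : Scheme} (e : A ⟶ X) (p : Y ⟶ X) :
    pullback.diagonal (pullback.fst e p) ≫ sqMap e p = pullback.snd e p ≫ pullback.diagonal p := by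
  ext <;> simp only [sqMap, Category.assoc, pullback.lift_fst, pullback.lift_snd,
    pullback.diagonal_fst_assoc, pullback.diagonal_snd_assoc, pullback.diagonal_fst,
    pullback.diagonal_snd, Category.comp_id]

lemma range_sqMap_subset_range_diagonal {X Y A : Scheme} (e : A ⟶ X) (p : Y ⟶ X)
    [Mono (pullback.fst e p)] :
    Set.range (sqMap e p) ⊆ Set.range (pullback.diagonal p) := by
  rintro _ ⟨w, rfl⟩
  obtain ⟨v, rfl⟩ := (pullback.diagonal (pullback.fst e p)).surjective w
  exact ⟨pullback.snd e p v, by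
    rw [← Scheme.Hom.comp_apply, ← Scheme.Hom.comp_apply, diagonal_comp_sqMap]⟩

theorem stmt_9 (X Y A : Scheme) (p : Y ⟶ X) (e : A ⟶ X)
    [IsProper p] [IsClosedImmersion e]
    -- `p⁻¹(X ∖ e(A)) ⟶ X ∖ e(A)` is an isomorphism, where `X ∖ e(A)` is the open
    -- complement of `e(A)`:
    (hiso : ∀ U : X.Opens, (U : Set X) = (Set.range e.base)ᶜ →
      IsIso (pullback.snd p U.ι)) :
    IsClosedImmersion (pullback.diagonal p) ∧
    IsClosedImmersion (sqMap e p) ∧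
    Set.range (pullback.diagonal p).base ∪ Set.range (sqMap e p).base = Set.univ := by
  refine ⟨inferInstance, by unfold sqMap; infer_instance, ?_⟩
  let U : X.Opens := ⟨(Set.range e)ᶜ, e.isClosedEmbedding.isClosed_range.isOpen_compl⟩
  have := hiso U rfl
  rw [range_sqMap, Set.eq_univ_iff_forall]
  intro z
  by_cases hz : z ∈ (pullback.fst p p ≫ p) ⁻¹' Set.range e
  · exact .inr hz
  · have : Mono (pullback.fst U.ι p) := by
      rw [← pullbackSymmetry_hom_comp_snd]
      infer_instance
    refine .inl (range_sqMap_subset_range_diagonal U.ι p ?_)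
    simpa [range_sqMap, U] using hz
end

section
/- Let X be a scheme and let i_1 : Z_1 → X and i_2 : Z_2 → X be closed immersions such that the underlying set of X is the union of the images of Z_1 and Z_2. Let U be a reduced irreducible scheme and f : U → X a morphism. Then f factors through i_1 or f factors through i_2, i.e. there exists a morphism g : U → Z_1 with i_1 ∘ g = f or a morphism g : U → Z_2 with i_2 ∘ g = f. -/
/-!
The preimages under `f` of the two closed images cover `U`, so by irreducibility one of them is
all of `U`. Pulling the closed immersion back along `f` then gives a surjective closed immersion
onto the reduced scheme `U`, which is an isomorphism; its inverse yields the factorization.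
-/

open AlgebraicGeometry CategoryTheory Limits

theorem range_subset_or_range_subset_of_union_eq_univ {X Y : Type*} [TopologicalSpace X]
    [TopologicalSpace Y] [PreirreducibleSpace X] {f : X → Y} (hf : Continuous f) {A B : Set Y}
    (hA : IsClosed A) (hB : IsClosed B) (hAB : A ∪ B = Set.univ) :
    Set.range f ⊆ A ∨ Set.range f ⊆ B := by
  have hrange : IsPreirreducible (Set.range f) := by
    simpa only [Set.image_univ] using
      PreirreducibleSpace.isPreirreducible_univ.image f hf.continuousOn
  exact isPreirreducible_iff_isClosed_union_isClosed.mp hrange A B hA hB (hAB ▸ Set.subset_univ _)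

theorem exists_comp_eq_of_range_subset {X Z U : Scheme} (i : Z ⟶ X) [IsClosedImmersion i]
    [IsReduced U] (f : U ⟶ X) (h : Set.range f.base ⊆ Set.range i.base) :
    ∃ g : U ⟶ Z, g ≫ i = f := by
  have : Surjective (pullback.fst f i) := by
    refine ⟨Set.range_eq_univ.mp ?_⟩
    rw [Scheme.Pullback.range_fst]
    exact Set.eq_univ_of_forall fun x ↦ h ⟨x, rfl⟩
  have := isIso_of_isClosedImmersion_of_surjective (pullback.fst f i)
  refine ⟨inv (pullback.fst f i) ≫ pullback.snd f i, ?_⟩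
  rw [Category.assoc, ← pullback.condition, IsIso.inv_hom_id_assoc]

theorem stmt_10 (X Z₁ Z₂ U : Scheme)
    (i₁ : Z₁ ⟶ X) (i₂ : Z₂ ⟶ X) [IsClosedImmersion i₁] [IsClosedImmersion i₂]
    (hcover : Set.range i₁.base ∪ Set.range i₂.base = Set.univ)
    [IsReduced U] [IrreducibleSpace U] (f : U ⟶ X) :
    (∃ g : U ⟶ Z₁, g ≫ i₁ = f) ∨ (∃ g : U ⟶ Z₂, g ≫ i₂ = f) :=
  (range_subset_or_range_subset_of_union_eq_univ f.base.hom.continuous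
    i₁.isClosedEmbedding.isClosed_range i₂.isClosedEmbedding.isClosed_range hcover).imp
    (exists_comp_eq_of_range_subset i₁ f) (exists_comp_eq_of_range_subset i₂ f)
end
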